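/- A commutative ring R is called seminormal if whenever b, c ∈ R satisfy b³ = c², there exists a ∈ R with a² = b and a³ = c. Prove that for a field k, the ring k[x, y]/(xy) (coordinate ring of a node) is seminormal, while the ring k[t², t³] ⊂ k[t] (coordinate ring of a cusp) is not seminormal. -/

import Mathlib

/-- A commutative ring `R` is seminormal (Swan) if whenever `b, c ∈ R` satisfy
`b³ = c²`, there exists `a ∈ R` with `a² = b` and `a³ = c`. -/
def Seminormal (R : Type*) [CommRing R] : Prop :=
  ∀ b c : R, b ^ 3 = c ^ 2 → ∃ a : R, a ^ 2 = b ∧ a ^ 3 = c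

/-!
The node is the fibre product `k[x] ×_k k[y]` of its two axes: restricting to the axes identifies
`k[x, y]/(xy)` with the pairs of polynomials having the same constant term. A fibre product of
seminormal rings over a reduced ring is seminormal, because in a reduced ring an element is
determined by its square and its cube. The factors `k[t]` are seminormal since they are integrally
closed: `c / b` is a root of `T² - b`.

For the cusp, `a² = t²` and `a³ = t³` force `a = t` in `k[t]`, but no element of `k[t², t³]` has
a linear term.
-/

open Polynomial

theorem eq_of_sq_eq_of_cube_eq {R : Type*} [CommRing R] [IsReduced R] {a b : R}
    (h₂ : a ^ 2 = b ^ 2) (h₃ : a ^ 3 = b ^ 3) : a = b := by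
  have h : (a - b) ^ 3 = 0 := by linear_combination 4 * h₃ - 3 * (a + b) * h₂
  exact sub_eq_zero.mp (IsReduced.eq_zero _ ⟨3, h⟩)

theorem seminormal_of_isIntegrallyClosed (R : Type*) [CommRing R] [IsDomain R]
    [IsIntegrallyClosed R] : Seminormal R := by
  intro b c hbc
  rcases eq_or_ne b 0 with rfl | hb
  · have hc : c = 0 := (pow_eq_zero_iff two_ne_zero).mp (by rw [← hbc]; ring)
    exact ⟨0, by simp, by simp [hc]⟩
  let K := FractionRing R
  have hbK : algebraMap R K b ≠ 0 := (map_ne_zero_iff _ (IsFractionRing.injective R K)).mpr hb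
  have hbcK : algebraMap R K b ^ 3 = algebraMap R K c ^ 2 := by rw [← map_pow, ← map_pow, hbc]
  set u : K := algebraMap R K c / algebraMap R K b
  have hu₂ : u ^ 2 = algebraMap R K b := by
    rw [div_pow, div_eq_iff (pow_ne_zero 2 hbK)]
    linear_combination -hbcK
  have hu₃ : u ^ 3 = algebraMap R K c := by
    rw [div_pow, div_eq_iff (pow_ne_zero 3 hbK)]
    linear_combination -algebraMap R K c * hbcK
  have hu : IsIntegral R u := ⟨X ^ 2 - C b, monic_X_pow_sub_C b two_ne_zero, by simp [hu₂]⟩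
  obtain ⟨a, ha⟩ := IsIntegrallyClosed.isIntegral_iff.mp hu
  exact ⟨a, IsFractionRing.injective R K (by rw [map_pow, ha, hu₂]),
    IsFractionRing.injective R K (by rw [map_pow, ha, hu₃])⟩

theorem Seminormal.of_pullback {R A B C : Type*} [CommRing R] [CommRing A] [CommRing B]
    [CommRing C] [IsReduced C] (hA : Seminormal A) (hB : Seminormal B)
    (f : R →+* A) (g : R →+* B) (p : A →+* C) (q : B →+* C) (hpq : ∀ r, p (f r) = q (g r))
    (hker : ∀ r, f r = 0 → g r = 0 → r = 0)
    (hsurj : ∀ a b, p a = q b → ∃ r, f r = a ∧ g r = b) : Seminormal R := by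
  have hinj : ∀ r s, f r = f s → g r = g s → r = s := fun r s hf hg =>
    sub_eq_zero.mp (hker _ (by rw [map_sub, hf, sub_self]) (by rw [map_sub, hg, sub_self]))
  intro b c hbc
  obtain ⟨a₁, ha₁b, ha₁c⟩ := hA (f b) (f c) (by rw [← map_pow, ← map_pow, hbc])
  obtain ⟨a₂, ha₂b, ha₂c⟩ := hB (g b) (g c) (by rw [← map_pow, ← map_pow, hbc])
  have hglue : p a₁ = q a₂ := eq_of_sq_eq_of_cube_eq
    (by rw [← map_pow, ← map_pow, ha₁b, ha₂b, hpq])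
    (by rw [← map_pow, ← map_pow, ha₁c, ha₂c, hpq])
  obtain ⟨a, rfl, rfl⟩ := hsurj a₁ a₂ hglue
  exact ⟨a, hinj _ _ (by rw [map_pow, ha₁b]) (by rw [map_pow, ha₂b]),
    hinj _ _ (by rw [map_pow, ha₁c]) (by rw [map_pow, ha₂c])⟩

theorem Polynomial.coeff_one_eq_zero_of_mem_adjoin_X_sq_X_cube {k : Type*} [CommRing k] {p : k[X]}
    (hp : p ∈ Algebra.adjoin k ({X ^ 2, X ^ 3} : Set k[X])) : p.coeff 1 = 0 := by
  induction hp using Algebra.adjoin_induction with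
  | mem x hx => rcases hx with rfl | rfl <;> simp [coeff_X_pow]
  | algebraMap r => simp
  | add x y _ _ hx hy => simp [hx, hy]
  | mul x y _ _ hx hy => simp [coeff_mul, Finset.Nat.antidiagonal_succ, hx, hy]

theorem not_seminormal_cusp (k : Type*) [CommRing k] [IsDomain k] :
    ¬ Seminormal (Algebra.adjoin k ({X ^ 2, X ^ 3} : Set k[X])) := by
  intro h
  obtain ⟨a, ha₂, ha₃⟩ := h ⟨X ^ 2, Algebra.subset_adjoin (by simp)⟩
    ⟨X ^ 3, Algebra.subset_adjoin (by simp)⟩ (by ext1; push_cast; ring)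
  have ha : (a : k[X]) = X := eq_of_sq_eq_of_cube_eq
    (by simpa using congrArg Subtype.val ha₂) (by simpa using congrArg Subtype.val ha₃)
  simpa [ha] using coeff_one_eq_zero_of_mem_adjoin_X_sq_X_cube a.2

section Node

variable (k : Type*) [CommRing k]

noncomputable def restrictAxis (i : Fin 2) : MvPolynomial (Fin 2) k →ₐ[k] k[X] :=
  MvPolynomial.aeval (Pi.single i X)

theorem X_dvd_sub_restrictAxis {i j : Fin 2} (hij : i ≠ j) (p : MvPolynomial (Fin 2) k) :
    MvPolynomial.X j ∣ p - aeval (MvPolynomial.X i) (restrictAxis k i p) := by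
  rw [← Ideal.mem_span_singleton, ← Ideal.Quotient.eq]
  let π := Ideal.Quotient.mkₐ k (Ideal.span {(MvPolynomial.X j : MvPolynomial (Fin 2) k)})
  have h : π = π.comp ((aeval (MvPolynomial.X i)).comp (restrictAxis k i)) := by
    refine MvPolynomial.algHom_ext fun l => ?_
    fin_cases i <;> fin_cases j <;> fin_cases l <;> simp_all [π, restrictAxis]
  exact congr($h p)

theorem restrictAxis_X_mul_X (i : Fin 2) :
    restrictAxis k i (MvPolynomial.X 0 * MvPolynomial.X 1) = 0 := by
  fin_cases i <;> simp [restrictAxis]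

theorem constantCoeff_restrictAxis (i : Fin 2) (p : MvPolynomial (Fin 2) k) :
    Polynomial.constantCoeff (restrictAxis k i p) = MvPolynomial.constantCoeff p := by
  induction p using MvPolynomial.induction_on with
  | C a => simp
  | add p q hp hq => rw [map_add, map_add, map_add, hp, hq]
  | mul_X p j hp => fin_cases i <;> fin_cases j <;> simp [restrictAxis]

theorem restrictAxis_aeval_X_self (i : Fin 2) (a : k[X]) :
    restrictAxis k i (aeval (MvPolynomial.X i) a) = a := by
  rw [← aeval_algHom_apply]
  simp [restrictAxis]

theorem restrictAxis_aeval_X_of_ne {i j : Fin 2} (hij : i ≠ j) (a : k[X]) :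
    restrictAxis k i (aeval (MvPolynomial.X j) a) = C (a.coeff 0) := by
  rw [← aeval_algHom_apply]
  fin_cases i <;> fin_cases j <;> simp_all [restrictAxis, ← coeff_zero_eq_aeval_zero']

theorem X_mul_X_dvd_of_restrictAxis_eq_zero [IsDomain k] {p : MvPolynomial (Fin 2) k}
    (h₀ : restrictAxis k 0 p = 0) (h₁ : restrictAxis k 1 p = 0) :
    MvPolynomial.X 0 * MvPolynomial.X 1 ∣ p := by
  have hX₁ : MvPolynomial.X 1 ∣ p := by
    simpa [h₀] using X_dvd_sub_restrictAxis k zero_ne_one p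
  obtain ⟨q, rfl⟩ : MvPolynomial.X 0 ∣ p := by
    simpa [h₁] using X_dvd_sub_restrictAxis k one_ne_zero p
  refine mul_dvd_mul_left _ ((MvPolynomial.X_prime.dvd_or_dvd hX₁).resolve_left fun hX => ?_)
  simpa [restrictAxis] using map_dvd (restrictAxis k 0) hX

theorem exists_restrictAxis_eq_of_coeff_zero_eq {a₀ a₁ : k[X]}
    (h : a₀.coeff 0 = a₁.coeff 0) : ∃ p, restrictAxis k 0 p = a₀ ∧ restrictAxis k 1 p = a₁ := by
  refine ⟨aeval (MvPolynomial.X 0) a₀ + aeval (MvPolynomial.X 1) a₁ -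
    MvPolynomial.C (a₀.coeff 0), ?_, ?_⟩
  · rw [map_sub, map_add, restrictAxis_aeval_X_self, restrictAxis_aeval_X_of_ne k zero_ne_one]
    simp [restrictAxis, h]
  · rw [map_sub, map_add, restrictAxis_aeval_X_self, restrictAxis_aeval_X_of_ne k one_ne_zero]
    simp [restrictAxis]

noncomputable def nodeToAxis (i : Fin 2) :
    MvPolynomial (Fin 2) k ⧸ Ideal.span {(MvPolynomial.X 0 * MvPolynomial.X 1 :
      MvPolynomial (Fin 2) k)} →+* k[X] :=
  Ideal.Quotient.lift _ (restrictAxis k i) fun p hp => by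
    obtain ⟨q, rfl⟩ := Ideal.mem_span_singleton'.mp hp
    change restrictAxis k i (q * _) = 0
    rw [map_mul, restrictAxis_X_mul_X, mul_zero]

end Node

theorem seminormal_node (k : Type*) [Field k] :
    Seminormal (MvPolynomial (Fin 2) k ⧸ Ideal.span {(MvPolynomial.X 0 * MvPolynomial.X 1 :
      MvPolynomial (Fin 2) k)}) := by
  refine (seminormal_of_isIntegrallyClosed k[X]).of_pullback
    (seminormal_of_isIntegrallyClosed k[X]) (nodeToAxis k 0) (nodeToAxis k 1)
    Polynomial.constantCoeff Polynomial.constantCoeff ?_ ?_ ?_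
  · rintro ⟨p⟩
    exact (constantCoeff_restrictAxis k 0 p).trans (constantCoeff_restrictAxis k 1 p).symm
  · rintro ⟨p⟩ h₀ h₁
    exact Ideal.Quotient.eq_zero_iff_mem.mpr <| Ideal.mem_span_singleton.mpr <|
      X_mul_X_dvd_of_restrictAxis_eq_zero k h₀ h₁
  · intro a₀ a₁ ha
    obtain ⟨p, h₀, h₁⟩ := exists_restrictAxis_eq_of_coeff_zero_eq k ha
    exact ⟨Ideal.Quotient.mk _ p, h₀, h₁⟩

/-- for a field `k`, the coordinate ring `k[x, y]/(xy)` of a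
node is seminormal, while the coordinate ring `k[t², t³] ⊆ k[t]` of a cusp is
not seminormal. -/
theorem node_seminormal_and_cusp_not_seminormal (k : Type*) [Field k] :
    Seminormal (MvPolynomial (Fin 2) k ⧸
      Ideal.span {(MvPolynomial.X 0 : MvPolynomial (Fin 2) k) *
        MvPolynomial.X 1}) ∧
    ¬ Seminormal (Algebra.adjoin k
      ({Polynomial.X ^ 2, Polynomial.X ^ 3} : Set (Polynomial k))) :=
  ⟨seminormal_node k, not_seminormal_cusp k⟩
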